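/- Let S : ω^ω → 2^ω be a function for which there exists a family ⟨P_s : s ∈ ω^{<ω}⟩ of perfect subsets of 2^ω such that for all s ∈ ω^{<ω} and n, m ∈ ℕ: P_{s⌢n} ⊆ P_s; if n ≠ m then P_{s⌢n} ∩ P_{s⌢m} = ∅; diam(P_s) ≤ 2^{-|s|}; and S(x) is the unique element of ⋂_{n∈ℕ} P_{x↾n} for every x ∈ ω^ω. Then there exists a perfect set Q ⊆ 2^ω such that m′(S^{-1}[⋃{P_s : s ∈ ω^{<ω} and μ_Q(P_s) = 0}]) < 1. -/

import Mathlib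

open MeasureTheory Set Pointwise

/-- The Cantor space `2^ω`, a compact topological group under coordinatewise
addition mod 2. -/
abbrev CS := ℕ → ZMod 2

/-- The basic clopen set `[w]` determined by a finite binary sequence `w`:
all `x ∈ 2^ω` extending `w`. -/
def cyl (w : List (ZMod 2)) : Set CS := {x | ∀ i, i < w.length → x i = w.getD i 0}

/-- `w` is a branching node of `P`: both `[w⌢0] ∩ P` and `[w⌢1] ∩ P` are nonempty. -/
def Branch (P : Set CS) (w : List (ZMod 2)) : Prop :=
  (cyl (w ++ [0]) ∩ P).Nonempty ∧ (cyl (w ++ [1]) ∩ P).Nonempty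

/-- A perfect subset of Cantor space: nonempty, closed, with no isolated points. -/
def PerfSet (P : Set CS) : Prop := Perfect P ∧ P.Nonempty

/-- `ν` is a canonical measure of the perfect set `P`: a Borel probability measure with
`ν P = 1` and `ν [w⌢0] = ν [w⌢1]` for every branching node `w` of `P`. -/
def IsCanonical (P : Set CS) (ν : Measure CS) : Prop :=
  IsProbabilityMeasure ν ∧ ν P = 1 ∧
    ∀ w : List (ZMod 2), Branch P w → ν (cyl (w ++ [0])) = ν (cyl (w ++ [1]))

/-- `A` is `P`-null: the `μ_P`-outer measure of `A ∩ P` is `0`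
(quantified over all canonical measures of `P`). -/
def PNull (P A : Set CS) : Prop := ∀ ν : Measure CS, IsCanonical P ν → ν (A ∩ P) = 0

/-- `A` is `P`-measurable: `A ∩ P` differs from a Borel set by a `P`-null set,
i.e. it is null-measurable with respect to the canonical measure of `P`. -/
def PMeasurable (P A : Set CS) : Prop :=
  ∀ ν : Measure CS, IsCanonical P ν → NullMeasurableSet (A ∩ P) ν

/-- `X` is perfectly null: `P`-null for every perfect set `P`. -/
def PerfectlyNull (X : Set CS) : Prop := ∀ P, PerfSet P → PNull P X

/-- `μ` is the fair-coin (Lebesgue product) measure on `2^ω`: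
a Borel probability measure with `μ [w] = 2^{-|w|}` for every finite binary sequence. -/
def IsFairCoin (μ : Measure CS) : Prop :=
  IsProbabilityMeasure μ ∧ ∀ w : List (ZMod 2), μ (cyl w) = (2 : ENNReal)⁻¹ ^ w.length

/-- The number of branching nodes of `P` that are proper initial segments of `v`. -/
noncomputable def brCount (P : Set CS) (v : List (ZMod 2)) : ℕ :=
  Set.ncard {u : List (ZMod 2) | u <+: v ∧ u ≠ v ∧ Branch P u}

/-- A balanced perfect set: branching nodes of strictly smaller level
are strictly shorter. -/
def BalancedPerf (P : Set CS) : Prop :=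
  PerfSet P ∧ ∀ v w : List (ZMod 2), Branch P v → Branch P w →
    brCount P v < brCount P w → v.length < w.length

/-- A uniformly perfect set: on each length, either all nodes meeting `P` branch,
or none does. -/
def UniformlyPerf (P : Set CS) : Prop :=
  PerfSet P ∧ ∀ n : ℕ,
    (∀ w : List (ZMod 2), w.length = n → (cyl w ∩ P).Nonempty → Branch P w) ∨
    (∀ w : List (ZMod 2), w.length = n → ¬ Branch P w)

/-- A Silver perfect set: determined by a partial function `ℕ ⇀ 2`
whose domain has infinite complement. -/
def SilverPerf (P : Set CS) : Prop :=
  ∃ f : ℕ → Option (ZMod 2), {n | f n = none}.Infinite ∧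
    P = {x | ∀ n b, f n = some b → x n = b}

/-- A Marczewski null (`s₀`) set. -/
def S0Set (X : Set CS) : Prop :=
  ∀ P, PerfSet P → ∃ Q, PerfSet Q ∧ Q ⊆ P ∧ Q ∩ X = ∅

/-- `S` is a Sierpiński set with respect to the measure `μ`: uncountable, with
countable intersection with every `μ`-null set. -/
def Sierpinski (μ : Measure CS) (S : Set CS) : Prop :=
  ¬ S.Countable ∧ ∀ N : Set CS, μ N = 0 → (S ∩ N).Countable

/-- The interleaving homeomorphism `h : 2^ω × 2^ω → 2^ω`,
`h(x,y) = ⟨x 0, y 0, x 1, y 1, …⟩`. -/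
def interleave (p : CS × CS) : CS := fun n => if n % 2 = 0 then p.1 (n / 2) else p.2 (n / 2)

/-- `X` is universally null: outer measure zero with respect to every finite diffused
Borel measure on `2^ω`. -/
def UniversallyNull (X : Set CS) : Prop :=
  ∀ μ : Measure CS, IsFiniteMeasure μ → (∀ x : CS, μ {x} = 0) → μ X = 0

/-- `X` is strongly null: for every sequence of positive `ε n` there are sets `A n` of
diameter `< ε n` (with respect to the standard metric `d(x,y) = 2^{-min{n : x n ≠ y n}}`,
expressed combinatorially) covering `X`. -/
def StronglyNull (X : Set CS) : Prop :=
  ∀ ε : ℕ → ℝ, (∀ n, 0 < ε n) → ∃ A : ℕ → Set CS,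
    (∀ n, ∃ N : ℕ, (2 : ℝ)⁻¹ ^ N < ε n ∧ ∀ x ∈ A n, ∀ y ∈ A n, ∀ i < N, x i = y i) ∧
    X ⊆ ⋃ n, A n

/-- `X` is perfectly null in the transitive sense: for every perfect `P` there is a
`G_δ` set `G ⊇ X` with `(G + t) ∩ P` being `P`-null for every `t`. -/
def PNPrime (X : Set CS) : Prop :=
  ∀ P, PerfSet P → ∃ G : Set CS, IsGδ G ∧ X ⊆ G ∧
    ∀ t : CS, PNull P ((fun g => g + t) '' G)

/-- Basic cylinder in the Baire space `ω^ω`. -/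
def cylN (w : List ℕ) : Set (ℕ → ℕ) := {x | ∀ i, i < w.length → x i = w.getD i 0}

/-- `μ` is the natural measure `m′` on the Baire space, determined by
`m′ [w] = ∏_{i<|w|} 2^{-(w i + 1)}`. -/
def IsGeomProd (μ : Measure (ℕ → ℕ)) : Prop :=
  IsProbabilityMeasure μ ∧ ∀ w : List ℕ,
    μ (cylN w) = ∏ i ∈ Finset.range w.length, (2 : ENNReal)⁻¹ ^ (w.getD i 0 + 1)

/-!
Take `Q = S[B]` for the compact set `B = {x | ∀ i, x i ≤ i + 1}`. The scheme makes `S` a continuous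
injection with `S⁻¹[P_s] = [s]`, so `Q` is perfect and `P_s ∩ Q = Q \ S[B \ [s]]` is relatively open
in `Q`. The canonical measure `μ_Q`, realised as the image of Haar measure under the map reading the
`k`-th bit of its argument at the `k`-th branching node, charges every nonempty relatively open
subset of `Q`. Hence no `μ_Q`-null `P_s` meets `Q`, the preimage misses `B`, and
`m′(ω^ω \ B) ≤ ∑ᵢ 2^{-(i+2)} = 1/2`.
-/

open Filter Topology Function
open scoped ENNReal

def initSeg {α : Type*} (x : ℕ → α) (n : ℕ) : List α := List.ofFn fun i : Fin n => x i

section InitSeg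

variable {α : Type*}

@[simp] lemma length_initSeg (x : ℕ → α) (n : ℕ) : (initSeg x n).length = n := by
  simp [initSeg]

@[simp] lemma initSeg_zero (x : ℕ → α) : initSeg x 0 = [] := rfl

lemma initSeg_succ (x : ℕ → α) (n : ℕ) : initSeg x (n + 1) = initSeg x n ++ [x n] := by
  rw [initSeg, List.ofFn_succ_last]
  simp [initSeg]

lemma initSeg_prefix (x : ℕ → α) {m n : ℕ} (h : m ≤ n) : initSeg x m <+: initSeg x n := by
  induction n, h using Nat.le_induction with
  | base => exact List.prefix_refl _
  | succ n _ ih => exact ih.trans (initSeg_succ x n ▸ List.prefix_append _ _)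

lemma initSeg_eq_initSeg_iff {x y : ℕ → α} {n : ℕ} :
    initSeg x n = initSeg y n ↔ ∀ i < n, x i = y i := by
  simp [initSeg, funext_iff, Fin.forall_iff]

lemma initSeg_length_eq_iff {x : ℕ → α} {w : List α} (d : α) :
    initSeg x w.length = w ↔ ∀ i < w.length, x i = w.getD i d := by
  refine ⟨fun h i hi => ?_, fun h => List.ext_getElem (by simp) fun i hi _ => ?_⟩
  · conv_rhs => rw [← h]
    simp [initSeg, hi]
  · simp [initSeg, h i (by simpa using hi), List.getElem?_eq_getElem (by simpa using hi)]

lemma exists_initSeg_eq_subset [TopologicalSpace α] {U : Set (ℕ → α)} (hU : IsOpen U) {x : ℕ → α}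
    (hx : x ∈ U) : ∃ n, {y | initSeg y n = initSeg x n} ⊆ U := by
  obtain ⟨I, u, hu, hsub⟩ := isOpen_pi_iff.mp hU x hx
  refine ⟨I.sup id + 1, fun y hy => hsub fun i hi => ?_⟩
  rw [initSeg_eq_initSeg_iff.mp hy i (Nat.lt_succ_of_le (Finset.le_sup (f := id) hi))]
  exact (hu i hi).2

variable [TopologicalSpace α] [DiscreteTopology α]

lemma isOpen_setOf_initSeg_eq (n : ℕ) (w : List α) : IsOpen {y : ℕ → α | initSeg y n = w} :=
  have hcont : Continuous fun (y : ℕ → α) (i : Fin n) => y i :=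
    continuous_pi fun i => continuous_apply (i : ℕ)
  (isOpen_discrete {v : Fin n → α | List.ofFn v = w}).preimage hcont

lemma continuous_of_forall_initSeg {β : Type*} [TopologicalSpace β] {f : (ℕ → α) → β}
    (h : ∀ x, ∃ n, ∀ y, initSeg y n = initSeg x n → f y = f x) : Continuous f := by
  refine IsLocallyConstant.continuous ((IsLocallyConstant.iff_eventually_eq f).mpr fun x => ?_)
  obtain ⟨n, hn⟩ := h x
  exact eventually_of_mem ((isOpen_setOf_initSeg_eq n _).mem_nhds rfl) hn

end InitSeg

section Cylinders

lemma ZMod.two_eq_zero_or_eq_one (c : ZMod 2) : c = 0 ∨ c = 1 := by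
  revert c; decide

lemma mem_cyl_iff {x : CS} {w : List (ZMod 2)} : x ∈ cyl w ↔ initSeg x w.length = w :=
  (initSeg_length_eq_iff 0).symm

lemma mem_cylN_iff {x : ℕ → ℕ} {w : List ℕ} : x ∈ cylN w ↔ initSeg x w.length = w :=
  (initSeg_length_eq_iff 0).symm

@[simp] lemma cyl_nil : cyl [] = univ := Set.ext fun x => by simp [mem_cyl_iff]

lemma isOpen_cyl (w : List (ZMod 2)) : IsOpen (cyl w) := by
  rw [show cyl w = _ from Set.ext fun _ => mem_cyl_iff]
  exact isOpen_setOf_initSeg_eq w.length w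

lemma isOpen_cylN (w : List ℕ) : IsOpen (cylN w) := by
  rw [show cylN w = _ from Set.ext fun _ => mem_cylN_iff]
  exact isOpen_setOf_initSeg_eq w.length w

lemma mem_cyl_append {v : List (ZMod 2)} {b : ZMod 2} {x : CS} :
    x ∈ cyl (v ++ [b]) ↔ x ∈ cyl v ∧ x v.length = b := by
  simp [mem_cyl_iff, initSeg_succ]

lemma cyl_eq_union_append (v : List (ZMod 2)) : cyl v = cyl (v ++ [0]) ∪ cyl (v ++ [1]) := by
  ext x
  simp only [mem_union, mem_cyl_append]
  rcases ZMod.two_eq_zero_or_eq_one (x v.length) with h | h <;> simp [h]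

end Cylinders

section CanonicalPositivity

variable {Q : Set CS} {ν : Measure CS}

lemma IsCanonical.measure_compl (hν : IsCanonical Q ν) (hQ : MeasurableSet Q) : ν Qᶜ = 0 :=
  have := hν.1
  (prob_compl_eq_zero_iff hQ).mpr hν.2.1

lemma IsCanonical.measure_cyl_ne_zero (hν : IsCanonical Q ν) (hQ : MeasurableSet Q) :
    ∀ w, (cyl w ∩ Q).Nonempty → ν (cyl w) ≠ 0 := by
  intro w
  induction w using List.reverseRecOn with
  | nil =>
    have := hν.1
    simp
  | append_singleton v b ih =>
    intro hb h0
    have hv : (cyl v ∩ Q).Nonempty :=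
      hb.mono (inter_subset_inter_left _ fun _ hx => (mem_cyl_append.mp hx).1)
    -- Each half of `cyl v` is null: the `b`-half by assumption, the other one because it
    -- either misses `Q` or has the same measure as the `b`-half.
    have hhalf : ∀ c : ZMod 2, ν (cyl (v ++ [c])) = 0 := by
      intro c
      by_cases hc : (cyl (v ++ [c]) ∩ Q).Nonempty
      · rcases ZMod.two_eq_zero_or_eq_one b with rfl | rfl <;>
          rcases ZMod.two_eq_zero_or_eq_one c with rfl | rfl
        · exact h0
        · rwa [← hν.2.2 v ⟨hb, hc⟩]
        · rwa [hν.2.2 v ⟨hc, hb⟩]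
        · exact h0
      · exact measure_mono_null (fun x hx hxQ => hc ⟨x, hx, hxQ⟩) (hν.measure_compl hQ)
    refine ih hv (nonpos_iff_eq_zero.mp ?_)
    calc ν (cyl v) ≤ ν (cyl (v ++ [0])) + ν (cyl (v ++ [1])) := by
          rw [cyl_eq_union_append v]; exact measure_union_le _ _
      _ = 0 := by simp [hhalf]

lemma IsCanonical.measure_inter_ne_zero (hν : IsCanonical Q ν) (hQ : IsClosed Q) {U : Set CS}
    (hU : IsOpen U) {q : CS} (hqU : q ∈ U) (hqQ : q ∈ Q) : ν (U ∩ Q) ≠ 0 := by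
  obtain ⟨n, hn⟩ := exists_initSeg_eq_subset hU hqU
  have hcyl : cyl (initSeg q n) ⊆ U := fun y hy => hn (by simpa [mem_cyl_iff] using hy)
  have hpos := hν.measure_cyl_ne_zero hQ.measurableSet (initSeg q n)
    ⟨q, by simp [mem_cyl_iff], hqQ⟩
  rw [← measure_inter_conull (hν.measure_compl hQ.measurableSet)] at hpos
  exact fun h => hpos (measure_mono_null (inter_subset_inter_left Q hcyl) h)

end CanonicalPositivity

section CanonicalMap

variable (Q : Set CS)

open Classical in
noncomputable def canonStep (w : List (ZMod 2)) (y : CS) : ZMod 2 :=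
  if Branch Q w then y (brCount Q w)
  else if (cyl (w ++ [0]) ∩ Q).Nonempty then 0 else 1

noncomputable def canonNode (y : CS) : ℕ → List (ZMod 2)
  | 0 => []
  | n + 1 => canonNode y n ++ [canonStep Q (canonNode y n) y]

/-- The canonical map `h_Q : 2^ω → Q`: it follows `Q` down the tree, and at the `k`-th branching
node on its way it turns according to the bit `y k`. -/
noncomputable def canonMap (y : CS) : CS := fun n => canonStep Q (canonNode Q y n) y

variable {Q}

lemma canonNode_eq_initSeg (y : CS) (n : ℕ) : canonNode Q y n = initSeg (canonMap Q y) n := by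
  induction n with
  | zero => rfl
  | succ n ih => rw [canonNode, initSeg_succ, ← ih]; rfl

@[simp] lemma length_canonNode (y : CS) (n : ℕ) : (canonNode Q y n).length = n := by
  simp [canonNode_eq_initSeg]

lemma canonMap_mem_cyl_iff {y : CS} {w : List (ZMod 2)} :
    canonMap Q y ∈ cyl w ↔ canonNode Q y w.length = w := by
  rw [mem_cyl_iff, canonNode_eq_initSeg]

lemma canonStep_congr {w : List (ZMod 2)} {y z : CS}
    (h : Branch Q w → y (brCount Q w) = z (brCount Q w)) : canonStep Q w y = canonStep Q w z := by
  unfold canonStep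
  split_ifs with hb <;> simp_all

lemma canonNode_congr {y z : CS} {n : ℕ}
    (h : ∀ m < n, Branch Q (canonNode Q y m) →
      y (brCount Q (canonNode Q y m)) = z (brCount Q (canonNode Q y m))) :
    canonNode Q y n = canonNode Q z n := by
  induction n with
  | zero => rfl
  | succ n ih =>
    have hn := ih fun m hm => h m (Nat.lt_succ_of_lt hm)
    rw [canonNode, canonNode, ← hn, canonStep_congr (h n (Nat.lt_succ_self n))]

lemma setOf_properPrefix_subset (w : List (ZMod 2)) :
    {u | u <+: w ∧ u ≠ w ∧ Branch Q u} ⊆ ↑((Finset.range w.length).image w.take) := by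
  rintro u ⟨hpre, hne, -⟩
  have hlt : u.length < w.length :=
    lt_of_le_of_ne hpre.length_le fun h => hne (hpre.eq_of_length h)
  simpa using ⟨u.length, hlt, (List.prefix_iff_eq_take.mp hpre).symm⟩

lemma brCount_le_length (w : List (ZMod 2)) : brCount Q w ≤ w.length :=
  (Set.ncard_le_ncard (setOf_properPrefix_subset w) (Finset.finite_toSet _)).trans
    ((Set.ncard_coe_finset _).trans_le (Finset.card_image_le.trans (by simp)))

lemma brCount_lt_of_prefix {u w : List (ZMod 2)} (hpre : u <+: w) (hne : u ≠ w)
    (hb : Branch Q u) : brCount Q u < brCount Q w := by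
  have hsub :
      insert u {v | v <+: u ∧ v ≠ u ∧ Branch Q v} ⊆ {v | v <+: w ∧ v ≠ w ∧ Branch Q v} := by
    rintro v (rfl | ⟨hvu, hne', hv⟩)
    · exact ⟨hpre, hne, hb⟩
    · refine ⟨hvu.trans hpre, fun hvw => hne' ?_, hv⟩
      subst hvw
      exact hvu.eq_of_length (le_antisymm hvu.length_le hpre.length_le)
  have hfin : {v | v <+: u ∧ v ≠ u ∧ Branch Q v}.Finite :=
    (Finset.finite_toSet _).subset (setOf_properPrefix_subset u)
  calc brCount Q u < (insert u {v | v <+: u ∧ v ≠ u ∧ Branch Q v}).ncard := by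
        rw [Set.ncard_insert_of_notMem (fun h => h.2.1 rfl) hfin]; exact Nat.lt_succ_self _
    _ ≤ brCount Q w :=
        Set.ncard_le_ncard hsub ((Finset.finite_toSet _).subset (setOf_properPrefix_subset w))

lemma continuous_canonMap : Continuous (canonMap Q) := by
  refine continuous_pi fun n => continuous_of_forall_initSeg fun y => ⟨n + 1, fun z hz => ?_⟩
  have hyz : ∀ m ≤ n, y (brCount Q (canonNode Q y m)) = z (brCount Q (canonNode Q y m)) :=
    fun m hm => (initSeg_eq_initSeg_iff.mp hz _ (Nat.lt_succ_of_le
      ((brCount_le_length _).trans ((length_canonNode y m).trans_le hm)))).symm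
  show canonStep Q (canonNode Q z n) z = canonStep Q (canonNode Q y n) y
  rw [← canonNode_congr fun m hm _ => hyz m hm.le]
  exact (canonStep_congr fun _ => hyz n le_rfl).symm

end CanonicalMap

section CanonicalMeasure

variable {Q : Set CS}

lemma IsClosed.mem_of_forall_cyl_inter_nonempty (hQ : IsClosed Q) {x : CS}
    (h : ∀ n, (cyl (initSeg x n) ∩ Q).Nonempty) : x ∈ Q := by
  by_contra hx
  obtain ⟨n, hn⟩ := exists_initSeg_eq_subset hQ.isOpen_compl hx
  obtain ⟨q, hq, hqQ⟩ := h n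
  exact hn (by simpa [mem_cyl_iff] using hq) hqQ

lemma canonNode_cyl_inter_nonempty (hne : Q.Nonempty) (y : CS) :
    ∀ n, (cyl (canonNode Q y n) ∩ Q).Nonempty
  | 0 => by simpa [canonNode] using hne
  | n + 1 => by
    have ih := canonNode_cyl_inter_nonempty hne y n
    simp only [canonNode, canonStep]
    split_ifs with hb h0
    · rcases ZMod.two_eq_zero_or_eq_one (y (brCount Q (canonNode Q y n))) with h | h <;>
        simp only [h, hb.1, hb.2]
    · exact h0
    · rw [cyl_eq_union_append, union_inter_distrib_right] at ih
      exact (union_nonempty.mp ih).resolve_left h0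

lemma canonMap_mem (hQ : IsClosed Q) (hne : Q.Nonempty) (y : CS) : canonMap Q y ∈ Q :=
  hQ.mem_of_forall_cyl_inter_nonempty fun n =>
    canonNode_eq_initSeg y n ▸ canonNode_cyl_inter_nonempty hne y n

/-- Flipping the bit `y (brCount Q w)` does not change whether the path of `y` passes through `w`,
since only bits of smaller index are read on the way to `w`. -/
lemma canonNode_single_add {w : List (ZMod 2)} {y : CS} (hy : canonNode Q y w.length = w) :
    canonNode Q (Pi.single (brCount Q w) 1 + y) w.length = w := by
  refine (canonNode_congr fun m hm hb => ?_).symm.trans hy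
  have hpre : canonNode Q y m <+: w := by
    rw [← hy, canonNode_eq_initSeg, canonNode_eq_initSeg]
    exact initSeg_prefix _ hm.le
  have hne : canonNode Q y m ≠ w := fun h => hm.ne (by simpa using congrArg List.length h)
  simp [(brCount_lt_of_prefix hpre hne hb).ne]

lemma canonNode_single_add_iff {w : List (ZMod 2)} {y : CS} :
    canonNode Q (Pi.single (brCount Q w) 1 + y) w.length = w ↔ canonNode Q y w.length = w := by
  refine ⟨fun h => ?_, canonNode_single_add⟩
  simpa [← add_assoc, CharTwo.add_self_eq_zero] using canonNode_single_add h

theorem isCanonical_map_canonMap (hQ : IsClosed Q) (hne : Q.Nonempty) (κ : Measure CS)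
    [IsProbabilityMeasure κ] [κ.IsAddLeftInvariant] : IsCanonical Q (κ.map (canonMap Q)) := by
  have hm : Measurable (canonMap Q) := continuous_canonMap.measurable
  refine ⟨Measure.isProbabilityMeasure_map hm.aemeasurable, ?_, fun w hb => ?_⟩
  · rw [Measure.map_apply hm hQ.measurableSet,
      show canonMap Q ⁻¹' Q = univ from eq_univ_of_forall (canonMap_mem hQ hne), measure_univ]
  set A := {y | canonNode Q y w.length = w}
  set j := brCount Q w
  have hpre : ∀ b, canonMap Q ⁻¹' cyl (w ++ [b]) = A ∩ {y | y j = b} := fun b => by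
    ext y
    simp only [mem_preimage, canonMap_mem_cyl_iff, List.length_append, List.length_singleton,
      canonNode, List.append_singleton_inj, mem_inter_iff, A, j]
    exact and_congr_right fun h => by rw [h, canonStep, if_pos hb]; rfl
  have hflip : (fun y => Pi.single j 1 + y) ⁻¹' (A ∩ {y | y j = 1}) = A ∩ {y | y j = 0} := by
    ext y
    simp [A, j, canonNode_single_add_iff]
  rw [Measure.map_apply hm (isOpen_cyl _).measurableSet,
    Measure.map_apply hm (isOpen_cyl _).measurableSet, hpre, hpre, ← hflip, measure_preimage_add]

theorem exists_isCanonical (hQ : IsClosed Q) (hne : Q.Nonempty) : ∃ ν, IsCanonical Q ν :=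
  have : IsProbabilityMeasure (Measure.addHaarMeasure (⊤ : TopologicalSpace.PositiveCompacts CS)) :=
    ⟨Measure.addHaarMeasure_self⟩
  ⟨_, isCanonical_map_canonMap hQ hne (Measure.addHaarMeasure ⊤)⟩

end CanonicalMeasure

section GeomProd

lemma ENNReal.tsum_inv_two_pow_add_add_one (m : ℕ) :
    ∑' k : ℕ, (2⁻¹ : ℝ≥0∞) ^ (m + k + 1) = 2⁻¹ ^ m := by
  simp_rw [add_assoc, pow_add _ m, ENNReal.tsum_mul_left, ENNReal.tsum_geometric_add_one,
    ENNReal.one_sub_inv_two, inv_inv, ENNReal.inv_mul_cancel two_ne_zero ENNReal.ofNat_ne_top,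
    mul_one]

variable {μ : Measure (ℕ → ℕ)}

lemma IsGeomProd.measure_cylN_append (hμ : IsGeomProd μ) (s : List ℕ) (j : ℕ) :
    μ (cylN (s ++ [j])) = μ (cylN s) * 2⁻¹ ^ (j + 1) := by
  rw [hμ.2, hμ.2, List.length_append, List.length_singleton, Finset.prod_range_succ,
    List.getD_append_right _ _ _ _ le_rfl]
  congr 1
  · exact Finset.prod_congr rfl fun i hi => by
      rw [List.getD_append _ _ _ _ (Finset.mem_range.mp hi)]
  · simp

lemma IsGeomProd.measure_le_apply_le (hμ : IsGeomProd μ) (i m : ℕ) :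
    μ {x | m ≤ x i} ≤ 2⁻¹ ^ m := by
  have hcover :
      {x : ℕ → ℕ | m ≤ x i} ⊆ ⋃ (v : Fin i → ℕ) (k : ℕ), cylN (List.ofFn v ++ [m + k]) := by
    intro x hx
    simp only [mem_iUnion]
    refine ⟨fun t => x t, x i - m, ?_⟩
    rw [mem_cylN_iff, List.length_append, List.length_ofFn, List.length_singleton,
      Nat.add_sub_cancel' hx.out, initSeg_succ]
    rfl
  have hdisj : Pairwise (Disjoint on fun v : Fin i → ℕ => cylN (List.ofFn v)) := by
    intro v v' hvv'
    refine Set.disjoint_left.mpr fun x hv hv' => hvv' (List.ofFn_injective ?_)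
    rw [mem_cylN_iff] at hv hv'
    simp only [List.length_ofFn] at hv hv'
    rw [← hv, ← hv']
  calc μ {x | m ≤ x i}
      ≤ ∑' (v : Fin i → ℕ) (k : ℕ), μ (cylN (List.ofFn v ++ [m + k])) :=
        (measure_mono hcover).trans ((measure_iUnion_le _).trans
          (ENNReal.tsum_le_tsum fun v => measure_iUnion_le _))
    _ = (∑' v : Fin i → ℕ, μ (cylN (List.ofFn v))) * 2⁻¹ ^ m := by
        simp_rw [hμ.measure_cylN_append, ENNReal.tsum_mul_left,
          ENNReal.tsum_inv_two_pow_add_add_one, ENNReal.tsum_mul_right]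
    _ ≤ 1 * 2⁻¹ ^ m := by
        have := hμ.1
        rw [← measure_iUnion hdisj fun v => (isOpen_cylN _).measurableSet]
        gcongr
        exact prob_le_one
    _ = 2⁻¹ ^ m := one_mul _

end GeomProd

section SuccBounded

def succBounded : Set (ℕ → ℕ) := univ.pi fun i => Iic (i + 1)

lemma isCompact_succBounded : IsCompact succBounded :=
  isCompact_univ_pi fun i => (finite_Iic (i + 1)).isCompact

lemma preperfect_succBounded : Preperfect succBounded := by
  intro x hx
  rw [accPt_iff_nhds]
  intro U hU
  obtain ⟨V, hVU, hV, hxV⟩ := mem_nhds_iff.mp hU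
  obtain ⟨n, hn⟩ := exists_initSeg_eq_subset hV hxV
  set y := update x n (if x n = 0 then 1 else 0)
  have hyx : y n ≠ x n := by simp only [y, update_self]; split_ifs <;> omega
  refine ⟨y, ⟨hVU (hn (initSeg_eq_initSeg_iff.mpr fun i hi => update_of_ne hi.ne _ _)), ?_⟩,
    fun h => hyx (congrFun h n)⟩
  intro i _
  by_cases hi : i = n
  · subst hi; simp only [y, update_self, mem_Iic]; split_ifs <;> omega
  · simpa [y, update_of_ne hi] using hx i trivial

lemma IsGeomProd.measure_compl_succBounded_lt_one {μ : Measure (ℕ → ℕ)} (hμ : IsGeomProd μ) :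
    μ succBoundedᶜ < 1 := by
  have hcover : succBoundedᶜ ⊆ ⋃ i, {x : ℕ → ℕ | 1 + i + 1 ≤ x i} := fun x hx => by
    simp only [succBounded, mem_compl_iff, mem_univ_pi, mem_Iic, not_forall, not_le] at hx
    obtain ⟨i, hi⟩ := hx
    exact mem_iUnion.mpr ⟨i, show 1 + i + 1 ≤ x i by omega⟩
  calc μ succBoundedᶜ ≤ ∑' i, μ {x : ℕ → ℕ | 1 + i + 1 ≤ x i} :=
        (measure_mono hcover).trans (measure_iUnion_le _)
    _ ≤ ∑' i : ℕ, (2⁻¹ : ℝ≥0∞) ^ (1 + i + 1) :=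
        ENNReal.tsum_le_tsum fun i => hμ.measure_le_apply_le i _
    _ < 1 := by
        rw [ENNReal.tsum_inv_two_pow_add_add_one, pow_one]
        exact ENNReal.inv_lt_one.mpr ENNReal.one_lt_two

end SuccBounded

section Scheme

variable {α : Type*} {P : List ℕ → Set α}

lemma append_subset_of_forall_append_singleton_subset (hsub : ∀ s n, P (s ++ [n]) ⊆ P s)
    (s r : List ℕ) : P (s ++ r) ⊆ P s := by
  induction r using List.reverseRecOn with
  | nil => simp
  | append_singleton r n ih => exact (List.append_assoc s r [n] ▸ hsub (s ++ r) n).trans ih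

lemma disjoint_of_length_eq (hsub : ∀ s n, P (s ++ [n]) ⊆ P s)
    (hdisj : ∀ s n m, n ≠ m → P (s ++ [n]) ∩ P (s ++ [m]) = ∅) {s t : List ℕ}
    (hlen : s.length = t.length) (hne : s ≠ t) : Disjoint (P s) (P t) := by
  induction s generalizing P t with
  | nil => exact absurd (List.length_eq_zero_iff.mp hlen.symm).symm hne
  | cons a s ih =>
    obtain ⟨b, t, rfl⟩ := List.exists_cons_of_length_eq_add_one hlen.symm
    by_cases hab : a = b
    · subst hab
      exact ih (P := fun r => P (a :: r)) (fun s n => hsub (a :: s) n)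
        (fun s n m => hdisj (a :: s) n m) (by simpa using hlen) (by simpa using hne)
    · exact (Set.disjoint_iff_inter_eq_empty.mpr (hdisj [] a b hab)).mono
        (append_subset_of_forall_append_singleton_subset hsub [a] s)
        (append_subset_of_forall_append_singleton_subset hsub [b] t)

end Scheme

structure IsLusinScheme (S : (ℕ → ℕ) → CS) (P : List ℕ → Set CS) : Prop where
  subset_append : ∀ (s : List ℕ) (n : ℕ), P (s ++ [n]) ⊆ P s
  inter_append_eq_empty : ∀ (s : List ℕ) (n m : ℕ), n ≠ m → P (s ++ [n]) ∩ P (s ++ [m]) = ∅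
  eq_of_mem : ∀ s : List ℕ, ∀ x ∈ P s, ∀ y ∈ P s, ∀ i < s.length, x i = y i
  iInter_eq : ∀ x : ℕ → ℕ, ⋂ n : ℕ, P (initSeg x n) = {S x}

section LusinScheme

variable {S : (ℕ → ℕ) → CS} {P : List ℕ → Set CS}

lemma IsLusinScheme.mem_initSeg (h : IsLusinScheme S P) (x : ℕ → ℕ) (n : ℕ) :
    S x ∈ P (initSeg x n) :=
  mem_iInter.mp (h.iInter_eq x ▸ mem_singleton (S x)) n

lemma IsLusinScheme.preimage_eq_cylN (h : IsLusinScheme S P) (s : List ℕ) : S ⁻¹' P s = cylN s := by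
  ext x
  rw [mem_preimage, mem_cylN_iff]
  refine ⟨fun hx => by_contra fun hne => ?_, fun hx => hx ▸ h.mem_initSeg x s.length⟩
  exact Set.disjoint_left.mp (disjoint_of_length_eq h.subset_append h.inter_append_eq_empty
    (length_initSeg x s.length) hne) (h.mem_initSeg x s.length) hx

lemma IsLusinScheme.injective (h : IsLusinScheme S P) : Injective S := fun x y hxy =>
  funext fun i => by
    have hy : y ∈ S ⁻¹' P (initSeg x (i + 1)) := by
      rw [mem_preimage, ← hxy]; exact h.mem_initSeg x (i + 1)
    rw [h.preimage_eq_cylN, mem_cylN_iff, length_initSeg, initSeg_eq_initSeg_iff] at hy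
    exact (hy i (Nat.lt_succ_self i)).symm

lemma IsLusinScheme.continuous (h : IsLusinScheme S P) : Continuous S :=
  continuous_pi fun k => continuous_of_forall_initSeg fun x => ⟨k + 1, fun y hy =>
    h.eq_of_mem _ _ (hy ▸ h.mem_initSeg y (k + 1)) _ (h.mem_initSeg x (k + 1)) k (by simp)⟩

lemma IsLusinScheme.exists_isOpen_inter_image_eq (h : IsLusinScheme S P) {B : Set (ℕ → ℕ)}
    (hB : IsCompact B) (s : List ℕ) : ∃ U, IsOpen U ∧ U ∩ S '' B = P s ∩ S '' B := by
  refine ⟨(S '' (B \ cylN s))ᶜ,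
    ((hB.diff (isOpen_cylN s)).image h.continuous).isClosed.isOpen_compl, ?_⟩
  have hU : ∀ x ∈ B, S x ∈ (S '' (B \ cylN s))ᶜ ↔ S x ∈ P s := fun x hx => by
    rw [mem_compl_iff, h.injective.mem_set_image, show S x ∈ P s ↔ x ∈ S ⁻¹' P s from Iff.rfl,
      h.preimage_eq_cylN]
    simp [hx]
  ext q
  constructor <;> rintro ⟨hq, x, hx, rfl⟩
  · exact ⟨(hU x hx).mp hq, x, hx, rfl⟩
  · exact ⟨(hU x hx).mpr hq, x, hx, rfl⟩

lemma IsLusinScheme.perfSet_image (h : IsLusinScheme S P) {B : Set (ℕ → ℕ)} (hB : IsCompact B)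
    (hBp : Preperfect B) (hne : B.Nonempty) : PerfSet (S '' B) := by
  refine ⟨⟨(hB.image h.continuous).isClosed, ?_⟩, hne.image S⟩
  rintro _ ⟨x, hx, rfl⟩
  simpa [map_principal] using (hBp x hx).map h.continuous.continuousAt h.injective

lemma IsLusinScheme.not_pNull_image (h : IsLusinScheme S P) {B : Set (ℕ → ℕ)} (hB : IsCompact B)
    {x : ℕ → ℕ} (hx : x ∈ B) {s : List ℕ} (hxs : S x ∈ P s) : ¬ PNull (S '' B) (P s) := by
  have hQ : IsClosed (S '' B) := (hB.image h.continuous).isClosed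
  obtain ⟨ν, hν⟩ := exists_isCanonical hQ ⟨S x, mem_image_of_mem S hx⟩
  obtain ⟨U, hU, hUeq⟩ := h.exists_isOpen_inter_image_eq hB s
  have hxU : S x ∈ U ∩ S '' B := hUeq ▸ ⟨hxs, mem_image_of_mem S hx⟩
  exact fun hnull => hν.measure_inter_ne_zero hQ hU hxU.1 hxU.2 (hUeq ▸ hnull ν hν)

lemma IsLusinScheme.preimage_biUnion_pNull_subset (h : IsLusinScheme S P) {B : Set (ℕ → ℕ)}
    (hB : IsCompact B) : S ⁻¹' (⋃ s ∈ {s : List ℕ | PNull (S '' B) (P s)}, P s) ⊆ Bᶜ := by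
  intro x hx hxB
  simp only [mem_preimage, mem_iUnion] at hx
  obtain ⟨s, hnull, hxs⟩ := hx
  exact h.not_pNull_image hB hxB hxs hnull

end LusinScheme

theorem stmt_5_general (S : (ℕ → ℕ) → CS) (P : List ℕ → Set CS)
    (hsub : ∀ (s : List ℕ) (n : ℕ), P (s ++ [n]) ⊆ P s)
    (hdisj : ∀ (s : List ℕ) (n m : ℕ), n ≠ m → P (s ++ [n]) ∩ P (s ++ [m]) = ∅)
    (hdiam : ∀ s : List ℕ, ∀ x ∈ P s, ∀ y ∈ P s, ∀ i < s.length, x i = y i)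
    (hS : ∀ x : ℕ → ℕ, ⋂ n : ℕ, P (List.ofFn fun i : Fin n => x i) = {S x}) :
    ∃ Q : Set CS, PerfSet Q ∧ ∀ μ : Measure (ℕ → ℕ), IsGeomProd μ →
      μ (S ⁻¹' (⋃ s ∈ {s : List ℕ | PNull Q (P s)}, P s)) < 1 := by
  have h : IsLusinScheme S P := ⟨hsub, hdisj, hdiam, hS⟩
  refine ⟨S '' succBounded, h.perfSet_image isCompact_succBounded preperfect_succBounded
    ⟨0, fun i _ => Nat.zero_le _⟩, fun μ hμ => ?_⟩
  calc μ (S ⁻¹' (⋃ s ∈ {s : List ℕ | PNull (S '' succBounded) (P s)}, P s))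
      ≤ μ succBoundedᶜ := measure_mono (h.preimage_biUnion_pNull_subset isCompact_succBounded)
    _ < 1 := hμ.measure_compl_succBounded_lt_one

/-- For any Lusin-type function `S : ω^ω → 2^ω` arising from a scheme
`⟨P_s : s ∈ ω^{<ω}⟩` of perfect sets (nested, disjoint at each node, with
`diam P_s ≤ 2^{-|s|}`, and `S x` the unique point of `⋂_n P_{x↾n}`), there is a perfect
set `Q` with `m′(S⁻¹[⋃ {P_s : μ_Q(P_s) = 0}]) < 1`. -/
theorem stmt_5 (S : (ℕ → ℕ) → CS) (P : List ℕ → Set CS)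
    (hperf : ∀ s, PerfSet (P s))
    (hsub : ∀ (s : List ℕ) (n : ℕ), P (s ++ [n]) ⊆ P s)
    (hdisj : ∀ (s : List ℕ) (n m : ℕ), n ≠ m → P (s ++ [n]) ∩ P (s ++ [m]) = ∅)
    (hdiam : ∀ s : List ℕ, ∀ x ∈ P s, ∀ y ∈ P s, ∀ i < s.length, x i = y i)
    (hS : ∀ x : ℕ → ℕ, ⋂ n : ℕ, P (List.ofFn fun i : Fin n => x i) = {S x}) :
    ∃ Q : Set CS, PerfSet Q ∧ ∀ μ : Measure (ℕ → ℕ), IsGeomProd μ →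
      μ (S ⁻¹' (⋃ s ∈ {s : List ℕ | PNull Q (P s)}, P s)) < 1 :=
  stmt_5_general S P hsub hdisj hdiam hS
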